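/- arXiv:0705.2810 — 3 statements merged into one kernel-verified Lean document; each statement's English description precedes it below -/
import Mathlib

section
/- Let γ ∈ (0,1) and f ∈ C_b(ℝⁿ). Then f ∈ C^γ_d(ℝⁿ) if and only if [f]_{γ,d} := sup{ |f(x)−f(y)| · |||x−y|||^{−γ} : x, y ∈ ℝⁿ, x ≠ y } is finite, i.e. if and only if f is γ-Hölder continuous with respect to the metric d; moreover the norm ‖f‖₀ + [f]_{γ,d} is equivalent on C^γ_d(ℝⁿ) to the norm ‖f‖_{γ,d}. -/
open scoped BigOperators
open MeasureTheory

noncomputable section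

/-- `ℝⁿ` as a Euclidean space. -/
abbrev En (n : ℕ) := EuclideanSpace ℝ (Fin n)

/-- The `i`-th canonical basis vector of `ℝⁿ`. -/
def evec (n : ℕ) (i : Fin n) : En n := EuclideanSpace.single i 1

/-- Action of an `n × n` matrix on `ℝⁿ`. -/
def matVec {n : ℕ} (A : Matrix (Fin n) (Fin n) ℝ) (x : En n) : En n :=
  Matrix.toEuclideanLin A x

/-- `V_m = span{A^j e_i : j ≤ m, i < p̃}`. -/
def kalmanSpan (n : ℕ) (A : Matrix (Fin n) (Fin n) ℝ) (p m : ℕ) : Submodule ℝ (En n) :=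
  Submodule.span ℝ
    {x : En n | ∃ j, j ≤ m ∧ ∃ i : Fin n, (i : ℕ) < p ∧ x = matVec (A ^ j) (evec n i)}

/-- The Kalman condition: the vectors `A^j e_i`, `j ≤ k`, `i < p̃`, span `ℝⁿ` for some `k`. -/
def KalmanCond (n : ℕ) (A : Matrix (Fin n) (Fin n) ℝ) (p : ℕ) : Prop :=
  ∃ k, kalmanSpan n A p k = ⊤

/-- `k` is the smallest nonnegative integer with `V_k = ℝⁿ`. -/
def KalmanSmallest (n : ℕ) (A : Matrix (Fin n) (Fin n) ℝ) (p k : ℕ) : Prop :=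
  kalmanSpan n A p k = ⊤ ∧ ∀ m, m < k → kalmanSpan n A p m ≠ ⊤

/-- `W_0 = V_0` and `W_m` is the orthogonal complement of `V_{m-1}` in `V_m`. -/
def Wspace (n : ℕ) (A : Matrix (Fin n) (Fin n) ℝ) (p : ℕ) : ℕ → Submodule ℝ (En n)
  | 0 => kalmanSpan n A p 0
  | m + 1 => kalmanSpan n A p (m + 1) ⊓ (kalmanSpan n A p m)ᗮ

/-- `E_m`, the orthogonal projection of `ℝⁿ` onto `W_m`. -/
def Eproj (n : ℕ) (A : Matrix (Fin n) (Fin n) ℝ) (p m : ℕ) (x : En n) : En n :=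
  (Submodule.orthogonalProjection (Wspace n A p m) x : En n)

/-- The quasi-norm `|||x||| = Σ_{h=0}^{k} |E_h x|^{1/(2h+1)}`. -/
def qnorm (n : ℕ) (A : Matrix (Fin n) (Fin n) ℝ) (p k : ℕ) (x : En n) : ℝ :=
  ∑ h ∈ Finset.range (k + 1), ‖Eproj n A p h x‖ ^ ((1 : ℝ) / (2 * (h : ℝ) + 1))

/-- Membership, with admissible constant `M`, in the Hölder space `C^s_b(E)` for non-integer
`s ∈ (0,3)`: bounded and `s`-Hölder for `s < 1`; bounded `C¹` with bounded `(s-1)`-Hölder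
derivative for `1 < s < 2`; bounded `C²` with bounded `(s-2)`-Hölder second derivative
for `2 < s < 3`. -/
def MemHolderB {E : Type*} [NormedAddCommGroup E] [NormedSpace ℝ E]
    (s : ℝ) (g : E → ℝ) (M : ℝ) : Prop :=
  if s < 1 then
    (∀ x, |g x| ≤ M) ∧ ∀ x y, |g x - g y| ≤ M * ‖x - y‖ ^ s
  else if s < 2 then
    ContDiff ℝ 1 g ∧ (∀ x, |g x| ≤ M) ∧ (∀ x, ‖fderiv ℝ g x‖ ≤ M) ∧
      ∀ x y, ‖fderiv ℝ g x - fderiv ℝ g y‖ ≤ M * ‖x - y‖ ^ (s - 1)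
  else
    ContDiff ℝ 2 g ∧ (∀ x, |g x| ≤ M) ∧ (∀ x, ‖fderiv ℝ g x‖ ≤ M) ∧
      (∀ x, ‖fderiv ℝ (fderiv ℝ g) x‖ ≤ M) ∧
      ∀ x y, ‖fderiv ℝ (fderiv ℝ g) x - fderiv ℝ (fderiv ℝ g) y‖ ≤ M * ‖x - y‖ ^ (s - 2)

/-- `C_b(ℝⁿ)`: uniformly continuous and bounded. -/
def IsCb (n : ℕ) (f : En n → ℝ) : Prop :=
  UniformContinuous f ∧ ∃ M, ∀ x, |f x| ≤ M

/-- The sup norm `‖f‖₀`, as the least uniform bound. -/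
def supNorm (n : ℕ) (f : En n → ℝ) : ℝ :=
  sInf {M | 0 ≤ M ∧ ∀ x, |f x| ≤ M}

/-- The restriction `w ↦ f (z + w)` of `f (z + ·)` to the subspace `W_m = E_m(ℝⁿ)`. -/
def restrictW (n : ℕ) (A : Matrix (Fin n) (Fin n) ℝ) (p m : ℕ) (f : En n → ℝ) (z : En n) :
    ↥(Wspace n A p m) → ℝ := fun w => f (z + (w : En n))

/-- `M` is an admissible constant for `f` in `C^γ_d(ℝⁿ)`: for every `z` and every `0 ≤ m ≤ k`,
the restriction of `f (z + ·)` to `E_m(ℝⁿ)` lies in `C^{γ/(2m+1)}_b(E_m(ℝⁿ))`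
with constant `M`. -/
def MemCd (n : ℕ) (A : Matrix (Fin n) (Fin n) ℝ) (p k : ℕ) (γ : ℝ) (f : En n → ℝ) (M : ℝ) :
    Prop :=
  ∀ z : En n, ∀ m, m ≤ k → MemHolderB (γ / (2 * (m : ℝ) + 1)) (restrictW n A p m f z) M

/-- `f ∈ C^γ_d(ℝⁿ)`. -/
def InCd (n : ℕ) (A : Matrix (Fin n) (Fin n) ℝ) (p k : ℕ) (γ : ℝ) (f : En n → ℝ) : Prop :=
  IsCb n f ∧ ∃ M, MemCd n A p k γ f M

/-- The norm `‖f‖_{γ,d}`, as the least admissible constant. -/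
def CdNorm (n : ℕ) (A : Matrix (Fin n) (Fin n) ℝ) (p k : ℕ) (γ : ℝ) (f : En n → ℝ) : ℝ :=
  sInf {M | 0 ≤ M ∧ MemCd n A p k γ f M}

/-- First partial (directional) derivative `D_i f`. -/
def pderiv1 (n : ℕ) (i : Fin n) (f : En n → ℝ) (x : En n) : ℝ :=
  deriv (fun t : ℝ => f (x + t • evec n i)) 0

/-- Second partial derivative `D²_{ij} f`. -/
def pderiv2 (n : ℕ) (i j : Fin n) (f : En n → ℝ) (x : En n) : ℝ :=
  pderiv1 n i (pderiv1 n j f) x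

/-- Test functions `φ ∈ C₀^∞(ℝⁿ)`: smooth with compact support. -/
def IsTest (n : ℕ) (φ : En n → ℝ) : Prop :=
  ContDiff ℝ (⊤ : ℕ∞) φ ∧ HasCompactSupport φ

/-- The formal adjoint
`𝒜*φ(x) = ½Tr(Q D²φ(x)) − ⟨Ax+F(x), Dφ(x)⟩ − φ(x)(div F(x) + Tr A)`. -/
def Astar (n : ℕ) (A Q : Matrix (Fin n) (Fin n) ℝ) (F : En n → En n) (φ : En n → ℝ)
    (x : En n) : ℝ :=
  (1 / 2) * (∑ i, ∑ j, Q i j * pderiv2 n i j φ x)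
    - (∑ i, (matVec A x + F x) i * pderiv1 n i φ x)
    - φ x * ((∑ i, pderiv1 n i (fun y => F y i) x) + Matrix.trace A)

/-- Distributional solution of `λu − 𝒜u = f`:
`u ∈ C_b(ℝⁿ)` and `λ∫uφ = ∫u 𝒜*φ + ∫fφ` for every test function `φ`. -/
def IsDistSol (n : ℕ) (A Q : Matrix (Fin n) (Fin n) ℝ) (F : En n → En n) (lam : ℝ)
    (f u : En n → ℝ) : Prop :=
  IsCb n u ∧ ∀ φ : En n → ℝ, IsTest n φ →
    lam * ∫ x, u x * φ x = (∫ x, u x * Astar n A Q F φ x) + ∫ x, f x * φ x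

/-- Space-distributional solution of `∂_t v = 𝒜v + H`, `v(0,·) = g` on `[0,T] × ℝⁿ`:
bounded continuous, equal to `g` at `t = 0`, `v(t,·) ∈ C_b(ℝⁿ)` uniformly in `t ∈ [0,T]`,
and for every test function `φ` the map `t ↦ ∫ v(t,·)φ` is continuously differentiable on
`[0,T]` with derivative `∫ v(t,·)𝒜*φ + ∫ H(t,·)φ`. -/
def IsSpaceDistSol (n : ℕ) (A Q : Matrix (Fin n) (Fin n) ℝ) (F : En n → En n) (T : ℝ)
    (H : ℝ → En n → ℝ) (g : En n → ℝ) (v : ℝ → En n → ℝ) : Prop :=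
  (∀ x, v 0 x = g x) ∧
  ContinuousOn (fun q : ℝ × En n => v q.1 q.2) (Set.Icc 0 T ×ˢ Set.univ) ∧
  (∃ M, ∀ t ∈ Set.Icc (0 : ℝ) T, ∀ x, |v t x| ≤ M) ∧
  (∀ ε > (0 : ℝ), ∃ δ > (0 : ℝ), ∀ y : En n, ‖y‖ < δ →
    ∀ t ∈ Set.Icc (0 : ℝ) T, ∀ x, |v t (x + y) - v t x| < ε) ∧
  ∀ φ : En n → ℝ, IsTest n φ →
    (∀ t ∈ Set.Icc (0 : ℝ) T,
      HasDerivWithinAt (fun s => ∫ x, v s x * φ x)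
        ((∫ x, v t x * Astar n A Q F φ x) + ∫ x, H t x * φ x) (Set.Icc 0 T) t) ∧
    ContinuousOn (fun t => (∫ x, v t x * Astar n A Q F φ x) + ∫ x, H t x * φ x)
      (Set.Icc 0 T)

/-- Block hypothesis on `Q`: symmetric, vanishing outside the upper-left `p̃ × p̃` block,
with positive definite upper-left block. -/
def QBlock (n p : ℕ) (Q : Matrix (Fin n) (Fin n) ℝ) : Prop :=
  Q.IsSymm ∧ (∀ i j : Fin n, (p ≤ (i : ℕ) ∨ p ≤ (j : ℕ)) → Q i j = 0) ∧
  ∀ ξ : Fin n → ℝ, (∀ i : Fin n, p ≤ (i : ℕ) → ξ i = 0) → ξ ≠ 0 →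
    0 < ∑ i, ∑ j, Q i j * ξ i * ξ j

/-- Structure and regularity hypothesis on `F`: only the first `p̃` components are non-zero,
`F` is Lipschitz continuous, and `F` has bounded derivatives up to third order. -/
def FHyp (n p : ℕ) (F : En n → En n) : Prop :=
  (∀ x, ∀ i : Fin n, p ≤ (i : ℕ) → F x i = 0) ∧
  (∃ L : NNReal, LipschitzWith L F) ∧ ContDiff ℝ 3 F ∧
  ∃ M, ∀ x, ‖fderiv ℝ F x‖ ≤ M ∧ ‖iteratedFDeriv ℝ 2 F x‖ ≤ M ∧ ‖iteratedFDeriv ℝ 3 F x‖ ≤ M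

/-- The `d`-Hölder bound: `|f(x) − f(y)| ≤ M |||x − y|||^γ` for all `x, y`. -/
def HolderDBound (n : ℕ) (A : Matrix (Fin n) (Fin n) ℝ) (p k : ℕ) (γ : ℝ) (f : En n → ℝ)
    (M : ℝ) : Prop :=
  ∀ x y : En n, x ≠ y → |f x - f y| ≤ M * qnorm n A p k (x - y) ^ γ

/-- The seminorm `[f]_{γ,d}`, as the least constant in the `d`-Hölder bound. -/
def holderDSemi (n : ℕ) (A : Matrix (Fin n) (Fin n) ℝ) (p k : ℕ) (γ : ℝ)
    (f : En n → ℝ) : ℝ :=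
  sInf {M | 0 ≤ M ∧ HolderDBound n A p k γ f M}


/-! Since `V_k = ℝⁿ`, the projections `E_0, …, E_k` are an orthogonal decomposition of the
identity, and on `W_m` the quasi-norm is `|w|^{1/(2m+1)}`. A `d`-Hölder bound therefore
restricts to a Euclidean `γ/(2m+1)`-Hölder bound on every translate of `W_m`. Conversely,
`f x - f y` telescopes along `y, y + E_0(x-y), y + E_0(x-y) + E_1(x-y), …, x` into `k+1`
increments, the `m`-th inside a translate of `W_m`, hence bounded by
`M |E_m(x-y)|^{γ/(2m+1)} ≤ M |||x-y|||^γ`. Comparing the least constants then gives the norm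
equivalence with `c₁ = 1` and `c₂ = k + 2`. -/

lemma abs_sub_le_of_forall_abs_add_sub_le {E : Type*} [AddCommMonoid E] (f : E → ℝ)
    (u : ℕ → E) {N : ℕ} {C : ℝ} (hu : ∀ z, ∀ j < N, |f (z + u j) - f z| ≤ C) (y : E) :
    |f (y + ∑ j ∈ Finset.range N, u j) - f y| ≤ N * C := by
  induction N with
  | zero => simp
  | succ N ih =>
    rw [Finset.sum_range_succ, ← add_assoc]
    calc _ ≤ |f (y + ∑ j ∈ Finset.range N, u j + u N) - f (y + ∑ j ∈ Finset.range N, u j)|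
          + |f (y + ∑ j ∈ Finset.range N, u j) - f y| := abs_sub_le _ _ _
      _ ≤ C + N * C := add_le_add (hu _ _ N.lt_succ_self) (ih fun z j hj => hu z j (by omega))
      _ = (N + 1 : ℕ) * C := by push_cast; ring

lemma Real.sInf_le_sInf_add_sInf {S T U : Set ℝ} (hS : S.Nonempty) (hT : T.Nonempty)
    (hU : BddBelow U) (h : ∀ a ∈ S, ∀ b ∈ T, a + b ∈ U) : sInf U ≤ sInf S + sInf T := by
  have hS' : ∀ b ∈ T, sInf U - b ≤ sInf S := fun b hb =>
    le_csInf hS fun a ha => by linarith [csInf_le hU (h a ha b hb)]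
  have hT' : sInf U - sInf S ≤ sInf T := le_csInf hT fun b hb => by linarith [hS' b hb]
  linarith

lemma Real.sInf_add_sInf_le_mul_sInf {S T U : Set ℝ} (hS : BddBelow S) (hT : BddBelow T)
    (hU : U.Nonempty) {c : ℝ} (hc : 0 ≤ c) (h : ∀ a ∈ U, a ∈ S ∧ c * a ∈ T) :
    sInf S + sInf T ≤ (1 + c) * sInf U := by
  have hS' : sInf S ≤ sInf U := csInf_le_csInf hS hU fun a ha => (h a ha).1
  have hT' : sInf T ≤ c * sInf U := by
    rw [← smul_eq_mul, ← Real.sInf_smul_of_nonneg hc]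
    refine csInf_le_csInf hT hU.smul_set ?_
    rintro _ ⟨a, ha, rfl⟩
    exact (h a ha).2
  linarith

lemma memHolderB_iff_of_lt_one {E : Type*} [NormedAddCommGroup E] [NormedSpace ℝ E] {s : ℝ}
    (hs : s < 1) {g : E → ℝ} {M : ℝ} :
    MemHolderB s g M ↔ (∀ x, |g x| ≤ M) ∧ ∀ x y, |g x - g y| ≤ M * ‖x - y‖ ^ s := by
  rw [MemHolderB, if_pos hs]

lemma div_two_mul_add_one_lt_one {γ : ℝ} (hγ : γ < 1) (m : ℕ) : γ / (2 * (m : ℝ) + 1) < 1 := by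
  rw [div_lt_one (by positivity)]
  linarith [m.cast_nonneg (α := ℝ)]

variable {n : ℕ} {A : Matrix (Fin n) (Fin n) ℝ} {p : ℕ}

lemma kalmanSpan_mono : Monotone (kalmanSpan n A p) := fun _ _ hm =>
  Submodule.span_mono fun _ ⟨j, hj, i, hi, hx⟩ => ⟨j, hj.trans hm, i, hi, hx⟩

lemma Wspace_le_kalmanSpan : ∀ m, Wspace n A p m ≤ kalmanSpan n A p m
  | 0 => le_rfl
  | _ + 1 => inf_le_left

lemma Wspace_isOrtho_of_lt {j h : ℕ} (hjh : j < h) : Wspace n A p j ⟂ Wspace n A p h := by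
  obtain ⟨h, rfl⟩ : ∃ h', h = h' + 1 := ⟨h - 1, by omega⟩
  exact (Submodule.isOrtho_orthogonal_right _).mono
    ((Wspace_le_kalmanSpan j).trans (kalmanSpan_mono (by omega))) inf_le_right

lemma pairwise_isOrtho_Wspace : Pairwise fun j h => Wspace n A p j ⟂ Wspace n A p h :=
  fun _ _ hjh => hjh.lt_or_gt.elim Wspace_isOrtho_of_lt fun hlt => (Wspace_isOrtho_of_lt hlt).symm

lemma kalmanSpan_le_iSup_Wspace {k m : ℕ} (hm : m ≤ k) :
    kalmanSpan n A p m ≤ ⨆ i : Fin (k + 1), Wspace n A p i := by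
  induction m with
  | zero => exact le_iSup (fun i : Fin (k + 1) => Wspace n A p i) 0
  | succ m ih =>
    rw [← Submodule.sup_orthogonal_inf_of_hasOrthogonalProjection
      (kalmanSpan_mono m.le_succ), inf_comm]
    exact sup_le (ih (by omega))
      (le_iSup (fun i : Fin (k + 1) => Wspace n A p i) ⟨m + 1, by omega⟩)

lemma Eproj_eq_starProjection (m : ℕ) (x : En n) :
    Eproj n A p m x = (Wspace n A p m).starProjection x := rfl

lemma sum_Eproj {k : ℕ} (hK : kalmanSpan n A p k = ⊤) (x : En n) :
    ∑ h ∈ Finset.range (k + 1), Eproj n A p h x = x := by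
  have hfam := (orthogonalFamily_iff_pairwise.2 (pairwise_isOrtho_Wspace (A := A) (p := p))).comp
    (Fin.val_injective (n := k + 1))
  rw [← Fin.sum_univ_eq_sum_range]
  exact hfam.sum_projection_of_mem_iSup x
    (kalmanSpan_le_iSup_Wspace le_rfl (hK ▸ Submodule.mem_top))

lemma Eproj_of_mem {m : ℕ} {v : En n} (hv : v ∈ Wspace n A p m) (h : ℕ) :
    Eproj n A p h v = if h = m then v else 0 := by
  rw [Eproj_eq_starProjection]
  split_ifs with hh
  · subst hh
    exact Submodule.starProjection_eq_self_iff.2 hv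
  · exact (Submodule.starProjection_apply_eq_zero_iff _).2
      (pairwise_isOrtho_Wspace (Ne.symm hh) hv)

lemma qnorm_of_mem {k m : ℕ} (hm : m ≤ k) {v : En n} (hv : v ∈ Wspace n A p m) :
    qnorm n A p k v = ‖v‖ ^ ((1 : ℝ) / (2 * (m : ℝ) + 1)) := by
  rw [qnorm, Finset.sum_eq_single_of_mem m (Finset.mem_range.2 (by omega))]
  · rw [Eproj_of_mem hv, if_pos rfl]
  · intro h _ hne
    rw [Eproj_of_mem hv, if_neg hne, norm_zero, Real.zero_rpow (by positivity)]

lemma rpow_norm_Eproj_le_qnorm {k j : ℕ} (hj : j ≤ k) (x : En n) :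
    ‖Eproj n A p j x‖ ^ ((1 : ℝ) / (2 * (j : ℝ) + 1)) ≤ qnorm n A p k x :=
  Finset.single_le_sum (f := fun h => ‖Eproj n A p h x‖ ^ ((1 : ℝ) / (2 * (h : ℝ) + 1)))
    (fun _ _ => by positivity) (Finset.mem_range.2 (by omega))

section MemCd

variable {k : ℕ} {γ : ℝ} {f : En n → ℝ} {M : ℝ}

lemma MemCd.abs_le (hγ : γ < 1) (h : MemCd n A p k γ f M) (x : En n) : |f x| ≤ M := by
  simpa [restrictW] using
    ((memHolderB_iff_of_lt_one (div_two_mul_add_one_lt_one hγ 0)).1 (h x 0 k.zero_le)).1 0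

lemma MemCd.nonneg (hγ : γ < 1) (h : MemCd n A p k γ f M) : 0 ≤ M :=
  (abs_nonneg _).trans (h.abs_le hγ 0)

lemma MemCd.holderDBound (hK : kalmanSpan n A p k = ⊤) (hγ0 : 0 ≤ γ) (hγ1 : γ < 1)
    (h : MemCd n A p k γ f M) : HolderDBound n A p k γ f ((k + 1) * M) := by
  intro x y _
  have hinc : ∀ z, ∀ j < k + 1,
      |f (z + Eproj n A p j (x - y)) - f z| ≤ M * qnorm n A p k (x - y) ^ γ := by
    intro z j hj
    have hE : Eproj n A p j (x - y) ∈ Wspace n A p j := Submodule.coe_mem _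
    calc |f (z + Eproj n A p j (x - y)) - f z|
        = |restrictW n A p j f z ⟨_, hE⟩ - restrictW n A p j f z 0| := by simp [restrictW]
      _ ≤ M * ‖(⟨_, hE⟩ : Wspace n A p j) - 0‖ ^ (γ / (2 * (j : ℝ) + 1)) :=
        ((memHolderB_iff_of_lt_one (div_two_mul_add_one_lt_one hγ1 j)).1
          (h z j (by omega))).2 _ _
      _ = M * (‖Eproj n A p j (x - y)‖ ^ ((1 : ℝ) / (2 * (j : ℝ) + 1))) ^ γ := by
        rw [sub_zero, ← Real.rpow_mul (norm_nonneg _), one_div_mul_eq_div]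
        rfl
      _ ≤ M * qnorm n A p k (x - y) ^ γ := by
        gcongr
        · exact h.nonneg hγ1
        · exact rpow_norm_Eproj_le_qnorm (by omega) _
  have := abs_sub_le_of_forall_abs_add_sub_le f (fun j => Eproj n A p j (x - y)) hinc y
  rwa [sum_Eproj hK, add_sub_cancel, Nat.cast_succ, ← mul_assoc] at this

lemma memCd_of_abs_le_of_holderDBound (hγ : γ < 1) {M₁ M₂ : ℝ} (hM₂ : 0 ≤ M₂)
    (h₁ : ∀ x, |f x| ≤ M₁) (h₂ : HolderDBound n A p k γ f M₂) :
    MemCd n A p k γ f (M₁ + M₂) := by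
  have hM₁ : 0 ≤ M₁ := (abs_nonneg _).trans (h₁ 0)
  intro z m hm
  refine (memHolderB_iff_of_lt_one (div_two_mul_add_one_lt_one hγ m)).2
    ⟨fun w => (h₁ _).trans (by linarith), fun w w' => ?_⟩
  rcases eq_or_ne w w' with rfl | hne
  · rw [sub_self, abs_zero]
    positivity
  have hxy : z + (w : En n) ≠ z + w' := by simpa using Subtype.coe_ne_coe.2 hne
  calc |restrictW n A p m f z w - restrictW n A p m f z w'|
      ≤ M₂ * qnorm n A p k ((w - w' : Wspace n A p m) : En n) ^ γ := by
        simpa [restrictW] using h₂ _ _ hxy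
    _ = M₂ * ‖w - w'‖ ^ (γ / (2 * (m : ℝ) + 1)) := by
        rw [qnorm_of_mem hm (w - w').2, ← Real.rpow_mul (norm_nonneg _), one_div_mul_eq_div]
        rfl
    _ ≤ (M₁ + M₂) * ‖w - w'‖ ^ (γ / (2 * (m : ℝ) + 1)) := by
        gcongr
        linarith

lemma cdNorm_le_supNorm_add_holderDSemi (hK : kalmanSpan n A p k = ⊤) (hγ0 : 0 ≤ γ)
    (hγ1 : γ < 1) (hM : MemCd n A p k γ f M) :
    CdNorm n A p k γ f ≤ supNorm n f + holderDSemi n A p k γ f :=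
  Real.sInf_le_sInf_add_sInf ⟨M, hM.nonneg hγ1, hM.abs_le hγ1⟩
    ⟨_, mul_nonneg (by positivity) (hM.nonneg hγ1), hM.holderDBound hK hγ0 hγ1⟩
    ⟨0, fun _ h => h.1⟩ fun _ ha _ hb =>
      ⟨add_nonneg ha.1 hb.1, memCd_of_abs_le_of_holderDBound hγ1 hb.1 ha.2 hb.2⟩

lemma supNorm_add_holderDSemi_le_cdNorm (hK : kalmanSpan n A p k = ⊤) (hγ0 : 0 ≤ γ)
    (hγ1 : γ < 1) (hM : MemCd n A p k γ f M) :
    supNorm n f + holderDSemi n A p k γ f ≤ (k + 2) * CdNorm n A p k γ f := by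
  rw [show (k : ℝ) + 2 = 1 + (k + 1) by ring]
  refine Real.sInf_add_sInf_le_mul_sInf ⟨0, fun _ h => h.1⟩ ⟨0, fun _ h => h.1⟩ ?_
    (by positivity) fun _ ha => ?_
  · exact ⟨M, hM.nonneg hγ1, hM⟩
  · exact ⟨⟨ha.1, ha.2.abs_le hγ1⟩, mul_nonneg (by positivity) ha.1,
      ha.2.holderDBound hK hγ0 hγ1⟩

end MemCd

theorem stmt1_general (n p k : ℕ)
    (A : Matrix (Fin n) (Fin n) ℝ) (hK : KalmanSmallest n A p k)
    (γ : ℝ) (hγ0 : 0 < γ) (hγ1 : γ < 1) :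
    (∀ f : En n → ℝ, IsCb n f →
      (InCd n A p k γ f ↔ ∃ M, 0 ≤ M ∧ HolderDBound n A p k γ f M)) ∧
    ∃ c₁ c₂ : ℝ, 0 < c₁ ∧ 0 < c₂ ∧ ∀ f : En n → ℝ, InCd n A p k γ f →
      c₁ * CdNorm n A p k γ f ≤ supNorm n f + holderDSemi n A p k γ f ∧
      supNorm n f + holderDSemi n A p k γ f ≤ c₂ * CdNorm n A p k γ f := by
  refine ⟨fun f hf => ⟨?_, ?_⟩, 1, k + 2, one_pos, by positivity, fun f ⟨_, M, hM⟩ =>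
    ⟨?_, supNorm_add_holderDSemi_le_cdNorm hK.1 hγ0.le hγ1 hM⟩⟩
  · rintro ⟨_, M, hM⟩
    exact ⟨_, mul_nonneg (by positivity) (hM.nonneg hγ1), hM.holderDBound hK.1 hγ0.le hγ1⟩
  · rintro ⟨M, hM, hfM⟩
    obtain ⟨M₀, hfM₀⟩ := hf.2
    exact ⟨hf, _, memCd_of_abs_le_of_holderDBound hγ1 hM hfM₀ hfM⟩
  · rw [one_mul]
    exact cdNorm_le_supNorm_add_holderDSemi hK.1 hγ0.le hγ1 hM

/-- For `γ ∈ (0,1)` and `f ∈ C_b(ℝⁿ)`: `f ∈ C^γ_d(ℝⁿ)` iff `f` is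
`γ`-Hölder continuous with respect to the metric `d`, i.e. `[f]_{γ,d} < ∞`; moreover
`‖f‖₀ + [f]_{γ,d}` is equivalent on `C^γ_d(ℝⁿ)` to the norm `‖f‖_{γ,d}`. -/
theorem stmt1 (n p k : ℕ) (hn : 1 ≤ n) (hp : 1 ≤ p) (hpn : p ≤ n)
    (A : Matrix (Fin n) (Fin n) ℝ) (hK : KalmanSmallest n A p k)
    (γ : ℝ) (hγ0 : 0 < γ) (hγ1 : γ < 1) :
    (∀ f : En n → ℝ, IsCb n f →
      (InCd n A p k γ f ↔ ∃ M, 0 ≤ M ∧ HolderDBound n A p k γ f M)) ∧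
    ∃ c₁ c₂ : ℝ, 0 < c₁ ∧ 0 < c₂ ∧ ∀ f : En n → ℝ, InCd n A p k γ f →
      c₁ * CdNorm n A p k γ f ≤ supNorm n f + holderDSemi n A p k γ f ∧
      supNorm n f + holderDSemi n A p k γ f ≤ c₂ * CdNorm n A p k γ f :=
  stmt1_general n p k A hK γ hγ0 hγ1

end
end

section
/- Let E₀,…,E_k be orthogonal projections of ℝⁿ onto mutually orthogonal subspaces with ℝⁿ = ⊕_{i=0}^k E_i(ℝⁿ), let A be an n×n real matrix, and let c > 0 be a constant such that ‖E_i e^{tA} E_h‖ ≤ c t^{i−h} for 0 ≤ h ≤ i ≤ k and ‖E_i e^{tA} E_h‖ ≤ c t for 0 ≤ i < h ≤ k, for all t ∈ [0,1]. Then there exists c₁ > 0, depending only on c, such that for every h ∈ {0,…,k}, every v ∈ E_h(ℝⁿ) with 0 < |v| ≤ 1, and every t with 0 ≤ t ≤ |v|^{2/(2h+1)}, one has Σ_{i=0}^k |E_i e^{tA} v|^{1/(2i+1)} ≤ c₁ (k+1) |v|^{1/(2h+1)}. -/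
/-!
Put `s = |v|` and `p = 2h + 1`, so that `t ≤ s^{2/p}`. For `i ≥ h` the hypothesis gives
`|E_i e^{tA} v| ≤ c t^{i-h} s ≤ c s^{2(i-h)/p + 1} = c s^{(2i+1)/p}`; for `i < h` it gives
`|E_i e^{tA} v| ≤ c t s ≤ c s^{(p+2)/p} ≤ c s^{(2i+1)/p}`, using `s ≤ 1`. Taking the
`(2i+1)`-th root, every summand is at most `max c 1 · s^{1/p}`, and there are `k + 1` of them.
-/

open scoped RealInnerProductSpace

noncomputable section

/-- `e^{tA}` as a continuous linear operator on `ℝⁿ`, for a matrix `A`. -/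
def expMat (n : ℕ) (A : Matrix (Fin n) (Fin n) ℝ) (t : ℝ) : En n →L[ℝ] En n :=
  NormedSpace.exp (t • Matrix.toEuclideanCLM (𝕜 := ℝ) A)

open Real

lemma pow_mul_le_rpow_of_le_rpow {s t p : ℝ} (hs : 0 < s) (hp : 0 < p) (ht : 0 ≤ t)
    (hts : t ≤ s ^ (2 / p)) (m : ℕ) : t ^ m * s ≤ s ^ ((2 * m + p) / p) :=
  calc t ^ m * s ≤ (s ^ (2 / p)) ^ m * s := by gcongr
    _ = s ^ ((2 * m + p) / p) := by
      rw [← rpow_natCast, ← rpow_mul hs.le, ← rpow_add_one hs.ne']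
      congr 1
      field_simp

lemma mul_le_rpow_of_le_rpow {s t p q : ℝ} (hs : 0 < s) (hs1 : s ≤ 1) (hp : 0 < p)
    (hts : t ≤ s ^ (2 / p)) (hq : q ≤ p + 2) : t * s ≤ s ^ (q / p) :=
  calc t * s ≤ s ^ (2 / p) * s := by gcongr
    _ = s ^ ((p + 2) / p) := by
      rw [← rpow_add_one hs.ne']
      congr 1
      field_simp
      ring
    _ ≤ s ^ (q / p) := rpow_le_rpow_of_exponent_ge hs hs1 (by gcongr)

lemma rpow_le_max_one {c e : ℝ} (hc : 0 ≤ c) (he0 : 0 ≤ e) (he1 : e ≤ 1) : c ^ e ≤ max c 1 :=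
  calc c ^ e ≤ max c 1 ^ e := rpow_le_rpow hc (le_max_left c 1) he0
    _ ≤ max c 1 ^ (1 : ℝ) := rpow_le_rpow_of_exponent_le (le_max_right c 1) he1
    _ = max c 1 := rpow_one _

lemma rpow_one_div_le_of_le_mul_rpow {x c s p q : ℝ} (hx : 0 ≤ x) (hc : 0 ≤ c) (hs : 0 ≤ s)
    (hq : 1 ≤ q) (h : x ≤ c * s ^ (q / p)) : x ^ (1 / q) ≤ max c 1 * s ^ (1 / p) :=
  calc x ^ (1 / q) ≤ (c * s ^ (q / p)) ^ (1 / q) := by gcongr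
    _ = c ^ (1 / q) * s ^ (1 / p) := by
      rw [mul_rpow hc (by positivity), ← rpow_mul hs]
      congr 2
      field_simp
    _ ≤ max c 1 * s ^ (1 / p) := by
      gcongr
      exact rpow_le_max_one hc (by positivity) ((div_le_one (by positivity)).2 hq)

lemma norm_proj_expMat_le {n k : ℕ} {E : Fin (k + 1) → (En n →L[ℝ] En n)}
    {A : Matrix (Fin n) (Fin n) ℝ} {c : ℝ} (hc : 0 ≤ c)
    (h1 : ∀ t ∈ Set.Icc (0 : ℝ) 1, ∀ h i : Fin (k + 1), (h : ℕ) ≤ (i : ℕ) →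
      ‖(E i).comp ((expMat n A t).comp (E h))‖ ≤ c * t ^ ((i : ℕ) - (h : ℕ)))
    (h2 : ∀ t ∈ Set.Icc (0 : ℝ) 1, ∀ h i : Fin (k + 1), (i : ℕ) < (h : ℕ) →
      ‖(E i).comp ((expMat n A t).comp (E h))‖ ≤ c * t)
    {h : Fin (k + 1)} {v : En n} (hv : E h v = v) (hv0 : 0 < ‖v‖) (hv1 : ‖v‖ ≤ 1)
    {t : ℝ} (ht0 : 0 ≤ t) (ht : t ≤ ‖v‖ ^ ((2 : ℝ) / (2 * (h : ℕ) + 1))) (i : Fin (k + 1)) :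
    ‖E i (expMat n A t v)‖ ≤ c * ‖v‖ ^ ((2 * (i : ℕ) + 1 : ℝ) / (2 * (h : ℕ) + 1)) := by
  have htI : t ∈ Set.Icc (0 : ℝ) 1 :=
    ⟨ht0, ht.trans (rpow_le_one hv0.le hv1 (by positivity))⟩
  have hp : (0 : ℝ) < 2 * (h : ℕ) + 1 := by positivity
  have hEv : E i (expMat n A t v) = (E i).comp ((expMat n A t).comp (E h)) v := by
    simp [hv]
  rw [hEv, mul_comm c]
  rcases le_or_gt (h : ℕ) (i : ℕ) with hhi | hih
  · have hexp : (2 * (i : ℕ) + 1 : ℝ) = 2 * ((i - h : ℕ) : ℝ) + (2 * (h : ℕ) + 1) := by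
      push_cast [hhi]
      ring
    calc _ ≤ c * t ^ ((i : ℕ) - (h : ℕ)) * ‖v‖ := 
        ContinuousLinearMap.le_of_opNorm_le _ (h1 t htI h i hhi) v
      _ = c * (t ^ ((i : ℕ) - (h : ℕ)) * ‖v‖) := mul_assoc _ _ _
      _ ≤ _ := by
        rw [mul_comm _ c, hexp]
        gcongr
        exact pow_mul_le_rpow_of_le_rpow hv0 hp ht0 ht _
  · have hexp : (2 * (i : ℕ) + 1 : ℝ) ≤ 2 * (h : ℕ) + 1 + 2 := by
      have : ((i : ℕ) : ℝ) < (h : ℕ) := by exact_mod_cast hih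
      linarith
    calc _ ≤ c * t * ‖v‖ := 
        ContinuousLinearMap.le_of_opNorm_le _ (h2 t htI h i hih) v
      _ = c * (t * ‖v‖) := mul_assoc _ _ _
      _ ≤ _ := by
        rw [mul_comm _ c]
        gcongr
        exact mul_le_rpow_of_le_rpow hv0 hv1 hp ht hexp

theorem stmt14_general (n k : ℕ) (E : Fin (k + 1) → (En n →L[ℝ] En n))
    (A : Matrix (Fin n) (Fin n) ℝ) (c : ℝ) (hc : 0 < c)
    (h1 : ∀ t ∈ Set.Icc (0 : ℝ) 1, ∀ h i : Fin (k + 1), (h : ℕ) ≤ (i : ℕ) →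
      ‖(E i).comp ((expMat n A t).comp (E h))‖ ≤ c * t ^ ((i : ℕ) - (h : ℕ)))
    (h2 : ∀ t ∈ Set.Icc (0 : ℝ) 1, ∀ h i : Fin (k + 1), (i : ℕ) < (h : ℕ) →
      ‖(E i).comp ((expMat n A t).comp (E h))‖ ≤ c * t) :
    ∃ c₁ : ℝ, 0 < c₁ ∧ ∀ h : Fin (k + 1), ∀ v : En n, E h v = v →
      0 < ‖v‖ → ‖v‖ ≤ 1 → ∀ t : ℝ, 0 ≤ t → t ≤ ‖v‖ ^ ((2 : ℝ) / (2 * (h : ℕ) + 1)) →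
        (∑ i : Fin (k + 1), ‖E i (expMat n A t v)‖ ^ ((1 : ℝ) / (2 * (i : ℕ) + 1))) ≤
          c₁ * (k + 1) * ‖v‖ ^ ((1 : ℝ) / (2 * (h : ℕ) + 1)) := by
  refine ⟨max c 1, lt_max_of_lt_right one_pos, fun h v hv hv0 hv1 t ht0 ht => ?_⟩
  have hterm : ∀ i : Fin (k + 1), ‖E i (expMat n A t v)‖ ^ ((1 : ℝ) / (2 * (i : ℕ) + 1)) ≤
      max c 1 * ‖v‖ ^ ((1 : ℝ) / (2 * (h : ℕ) + 1)) := fun i =>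
    rpow_one_div_le_of_le_mul_rpow (norm_nonneg _) hc.le hv0.le (by simp)
      (norm_proj_expMat_le hc.le h1 h2 hv hv0 hv1 ht0 ht i)
  calc _ ≤ ∑ _i : Fin (k + 1), max c 1 * ‖v‖ ^ ((1 : ℝ) / (2 * (h : ℕ) + 1)) :=
        Finset.sum_le_sum fun i _ => hterm i
    _ = _ := by
      simp only [Finset.sum_const, Finset.card_univ, Fintype.card_fin, nsmul_eq_mul]
      push_cast
      ring

/-- Let `E₀,…,E_k` be the orthogonal projections of an orthogonal
decomposition `ℝⁿ = ⊕ E_i(ℝⁿ)` and suppose `‖E_i e^{tA} E_h‖ ≤ c t^{i−h}` for `h ≤ i` and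
`‖E_i e^{tA} E_h‖ ≤ c t` for `i < h`, `t ∈ [0,1]`. Then there exists `c₁ > 0`, depending
only on `c`, such that for `v ∈ E_h(ℝⁿ)` with `0 < |v| ≤ 1` and `0 ≤ t ≤ |v|^{2/(2h+1)}`,
`Σ_i |E_i e^{tA} v|^{1/(2i+1)} ≤ c₁ (k+1) |v|^{1/(2h+1)}`. -/
theorem stmt14 (n k : ℕ) (E : Fin (k + 1) → (En n →L[ℝ] En n))
    (hsa : ∀ i, ∀ x y : En n, ⟪E i x, y⟫ = ⟪x, E i y⟫)
    (hidem : ∀ i, (E i).comp (E i) = E i)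
    (horth : ∀ i j, i ≠ j → (E i).comp (E j) = 0)
    (hsum : (∑ i, E i) = ContinuousLinearMap.id ℝ (En n))
    (A : Matrix (Fin n) (Fin n) ℝ) (c : ℝ) (hc : 0 < c)
    (h1 : ∀ t ∈ Set.Icc (0 : ℝ) 1, ∀ h i : Fin (k + 1), (h : ℕ) ≤ (i : ℕ) →
      ‖(E i).comp ((expMat n A t).comp (E h))‖ ≤ c * t ^ ((i : ℕ) - (h : ℕ)))
    (h2 : ∀ t ∈ Set.Icc (0 : ℝ) 1, ∀ h i : Fin (k + 1), (i : ℕ) < (h : ℕ) →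
      ‖(E i).comp ((expMat n A t).comp (E h))‖ ≤ c * t) :
    ∃ c₁ : ℝ, 0 < c₁ ∧ ∀ h : Fin (k + 1), ∀ v : En n, E h v = v →
      0 < ‖v‖ → ‖v‖ ≤ 1 → ∀ t : ℝ, 0 ≤ t → t ≤ ‖v‖ ^ ((2 : ℝ) / (2 * (h : ℕ) + 1)) →
        (∑ i : Fin (k + 1), ‖E i (expMat n A t v)‖ ^ ((1 : ℝ) / (2 * (i : ℕ) + 1))) ≤
          c₁ * (k + 1) * ‖v‖ ^ ((1 : ℝ) / (2 * (h : ℕ) + 1)) :=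
  stmt14_general n k E A c hc h1 h2
end
end

section
/- Let θ ∈ (0,1), λ > 0, K > 0, h a nonnegative integer, and E a linear subspace of ℝⁿ. Let w : (0,∞) × ℝⁿ → ℝ be such that t ↦ w(t,x) is measurable for every x, sup_{x∈ℝⁿ} |w(t,x)| ≤ K ( t^{θ/2 − 1} + 1 ) for all t > 0, and |w(t,x+v) − w(t,x)| ≤ K ( t^{θ/2 − 3/2 − h} + 1 ) |v| for all t > 0, x ∈ ℝⁿ and v ∈ E. Then the integral U(x) = ∫₀^∞ e^{−λt} w(t,x) dt converges absolutely for every x ∈ ℝⁿ, and there exists a constant C depending only on θ, λ and h such that |U(x+v) − U(x)| ≤ C K |v|^{θ/(2h+1)} for all x ∈ ℝⁿ and all v ∈ E with 0 < |v| ≤ 1. -/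
open MeasureTheory

noncomputable section

/-!
Split `∫₀^∞ e^{-λt} (w(t,x+v) - w(t,x)) dt` at `T = |v|^{2/(2h+1)}`. On `(0,T]` the sup bound
gives `2K ∫₀ᵀ (t^{θ/2-1} + 1) dt ≲ K T^{θ/2}`; on `(T,∞)` the difference bound gives
`K|v| (∫_T^∞ t^{θ/2-3/2-h} dt + 1/λ) ≲ K|v| T^{θ/2-1/2-h}`. For this `T` both are
`≲ K |v|^{θ/(2h+1)}`; the exponent `θ/2 - 3/2 - h < -1` is what makes the tail integrable.
-/

open Real Set

theorem integrableOn_exp_neg_mul_mul_rpow_add_one {lam s : ℝ} (hlam : 0 < lam) (hs : -1 < s) :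
    IntegrableOn (fun t => exp (-(lam * t)) * (t ^ s + 1)) (Ioi 0) := by
  have hpow : IntegrableOn (fun t : ℝ => t ^ s * exp (-lam * t ^ (1 : ℝ))) (Ioi 0) :=
    integrableOn_rpow_mul_exp_neg_mul_rpow hs one_pos hlam
  refine (hpow.add (exp_neg_integrableOn_Ioi 0 hlam)).congr_fun (fun t _ => ?_)
    measurableSet_Ioi
  simp only [Pi.add_apply, rpow_one, neg_mul]
  ring

theorem integrableOn_exp_neg_mul_mul_of_abs_le {g : ℝ → ℝ} {K lam s : ℝ} (hlam : 0 < lam)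
    (hs : -1 < s) (hg : AEMeasurable g (volume.restrict (Ioi 0)))
    (hbound : ∀ t, 0 < t → |g t| ≤ K * (t ^ s + 1)) :
    IntegrableOn (fun t => exp (-(lam * t)) * g t) (Ioi 0) := by
  have hexp : Measurable fun t => exp (-(lam * t)) := by fun_prop
  refine ((integrableOn_exp_neg_mul_mul_rpow_add_one hlam hs).const_mul K).mono'
    (hexp.aemeasurable.mul hg).aestronglyMeasurable ?_
  filter_upwards [ae_restrict_mem measurableSet_Ioi] with t ht
  rw [norm_mul, norm_of_nonneg (exp_pos _).le, Real.norm_eq_abs, mul_left_comm]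
  exact mul_le_mul_of_nonneg_left (hbound t ht) (exp_pos _).le

theorem integral_Ioc_rpow_add_one {s T : ℝ} (hs : -1 < s) (hT : 0 ≤ T) :
    ∫ t in Ioc 0 T, (t ^ s + 1) = T ^ (s + 1) / (s + 1) + T := by
  rw [← intervalIntegral.integral_of_le hT, intervalIntegral.integral_add
      (intervalIntegral.intervalIntegrable_rpow' hs) intervalIntegrable_const,
    integral_rpow (Or.inl hs), zero_rpow (by linarith)]
  simp

theorem integral_Ioi_rpow_add_exp_neg_mul {p T lam : ℝ} (hp : p < -1) (hT : 0 < T)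
    (hlam : 0 < lam) :
    ∫ t in Ioi T, (t ^ p + exp (-(lam * t))) =
      -T ^ (p + 1) / (p + 1) + exp (-(lam * T)) / lam := by
  have hexp := integral_exp_mul_Ioi (neg_lt_zero.2 hlam) T
  have hexp_int : IntegrableOn (fun t => exp (-(lam * t))) (Ioi T) := by
    simpa only [neg_mul] using exp_neg_integrableOn_Ioi T hlam
  simp only [neg_mul] at hexp
  rw [integral_add (integrableOn_Ioi_rpow_of_lt hp hT) hexp_int, integral_Ioi_rpow_of_lt hp hT,
    hexp]
  ring

theorem integral_Ioc_abs_le_of_abs_le_rpow_add_one {F : ℝ → ℝ} {M s T : ℝ} (hs : -1 < s)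
    (hT : 0 ≤ T) (hF : ∀ t ∈ Ioc 0 T, |F t| ≤ M * (t ^ s + 1)) :
    ∫ t in Ioc 0 T, |F t| ≤ M * (T ^ (s + 1) / (s + 1) + T) := by
  have hint : IntegrableOn (fun t : ℝ => t ^ s + 1) (Ioc 0 T) := by
    rw [← intervalIntegrable_iff_integrableOn_Ioc_of_le hT]
    exact (intervalIntegral.intervalIntegrable_rpow' hs).add intervalIntegrable_const
  rw [← integral_Ioc_rpow_add_one hs hT, ← integral_const_mul]
  refine integral_mono_of_nonneg (Filter.Eventually.of_forall fun t => abs_nonneg _)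
    (hint.const_mul M) ?_
  filter_upwards [ae_restrict_mem measurableSet_Ioc] with t ht using hF t ht

theorem integral_Ioi_abs_le_of_abs_le_rpow_add_exp {F : ℝ → ℝ} {M p T lam : ℝ} (hp : p < -1)
    (hT : 0 < T) (hlam : 0 < lam) (hF : ∀ t ∈ Ioi T, |F t| ≤ M * (t ^ p + exp (-(lam * t)))) :
    ∫ t in Ioi T, |F t| ≤ M * (-T ^ (p + 1) / (p + 1) + exp (-(lam * T)) / lam) := by
  have hint : IntegrableOn (fun t : ℝ => t ^ p + exp (-(lam * t))) (Ioi T) :=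
    (integrableOn_Ioi_rpow_of_lt hp hT).add
      (by simpa only [neg_mul] using exp_neg_integrableOn_Ioi T hlam)
  rw [← integral_Ioi_rpow_add_exp_neg_mul hp hT hlam, ← integral_const_mul]
  refine integral_mono_of_nonneg (Filter.Eventually.of_forall fun t => abs_nonneg _)
    (hint.const_mul M) ?_
  filter_upwards [ae_restrict_mem measurableSet_Ioi] with t ht using hF t ht

theorem abs_integral_Ioi_le_integral_Ioc_add_integral_Ioi {F : ℝ → ℝ} {T : ℝ}
    (hF : IntegrableOn F (Ioi 0)) (hT : 0 ≤ T) :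
    |∫ t in Ioi 0, F t| ≤ (∫ t in Ioc 0 T, |F t|) + ∫ t in Ioi T, |F t| := by
  have habs : IntegrableOn (fun t => |F t|) (Ioi 0) := hF.abs
  rw [← setIntegral_union (Ioc_disjoint_Ioi le_rfl) measurableSet_Ioi
      (habs.mono_set Ioc_subset_Ioi_self) (habs.mono_set (Ioi_subset_Ioi hT)),
    Ioc_union_Ioi_eq_Ioi hT]
  exact abs_integral_le_integral_abs

theorem abs_exp_neg_mul_mul_le_of_abs_le {lam t d B s : ℝ} (hlam : 0 ≤ lam) (ht : 0 ≤ t)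
    (hB : 0 ≤ B) (hd : |d| ≤ B * (t ^ s + 1)) :
    |exp (-(lam * t)) * d| ≤ B * (t ^ s + exp (-(lam * t))) := by
  have hexp : exp (-(lam * t)) ≤ 1 := exp_le_one_iff.2 (neg_nonpos.2 (mul_nonneg hlam ht))
  rw [abs_mul, abs_exp]
  calc exp (-(lam * t)) * |d| ≤ exp (-(lam * t)) * (B * (t ^ s + 1)) := by gcongr
    _ = B * (exp (-(lam * t)) * t ^ s + exp (-(lam * t))) := by ring
    _ ≤ B * (t ^ s + exp (-(lam * t))) := by
        gcongr
        exact mul_le_of_le_one_left (rpow_nonneg ht _) hexp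

theorem abs_integral_Ioi_le_rpow_of_abs_le {F : ℝ → ℝ} {α p lam A B r : ℝ} (hα0 : 0 < α)
    (hα1 : α ≤ 1) (hp : p < -1) (hlam : 0 < lam) (hA : 0 ≤ A) (hB : 0 ≤ B) (hr0 : 0 < r)
    (hr1 : r ≤ 1) (hF : IntegrableOn F (Ioi 0))
    (hsmall : ∀ t, 0 < t → |F t| ≤ A * (t ^ (α - 1) + 1))
    (hlarge : ∀ t, 0 < t → |F t| ≤ B * r * (t ^ p + exp (-(lam * t)))) :
    |∫ t in Ioi 0, F t| ≤
      (A * (1 / α + 1) + B * (1 / lam - 1 / (p + 1))) * r ^ (α / (α - p - 1)) := by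
  set q := α - p - 1
  have hq : 0 < q := by linarith
  set R := r ^ (α / q)
  -- the splitting point `T` balances the two pieces: `T ^ α = r * T ^ (p + 1) = R`
  set T := r ^ q⁻¹
  have hT0 : 0 < T := rpow_pos_of_pos hr0 _
  have hT1 : T ≤ 1 := rpow_le_one hr0.le hr1 (inv_nonneg.2 hq.le)
  have hTα : T ^ α = R := by rw [← rpow_mul hr0.le, inv_mul_eq_div]
  have hrT : r * T ^ (p + 1) = R := by
    have hexponent : 1 + q⁻¹ * (p + 1) = α / q := by field_simp; ring
    rw [← rpow_mul hr0.le, ← rpow_one_add' hr0.le (hexponent ▸ (div_pos hα0 hq).ne'),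
      hexponent]
  have hT_le : T ≤ R := by simpa [hTα] using rpow_le_rpow_of_exponent_ge hT0 hT1 hα1
  have hr_le : r ≤ R := by
    simpa using rpow_le_rpow_of_exponent_ge hr0 hr1 ((div_le_one hq).2 (by linarith))
  have hexp : exp (-(lam * T)) ≤ 1 := exp_le_one_iff.2 (by nlinarith)
  have hsmall_int := integral_Ioc_abs_le_of_abs_le_rpow_add_one (by linarith : -1 < α - 1)
    hT0.le (fun t ht => hsmall t ht.1)
  have hlarge_int := integral_Ioi_abs_le_of_abs_le_rpow_add_exp hp hT0 hlam
    (fun t ht => hlarge t (hT0.trans ht))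
  rw [sub_add_cancel] at hsmall_int
  calc |∫ t in Ioi 0, F t| ≤ (∫ t in Ioc 0 T, |F t|) + ∫ t in Ioi T, |F t| :=
        abs_integral_Ioi_le_integral_Ioc_add_integral_Ioi hF hT0.le
    _ ≤ A * (T ^ α / α + T) + B * r * (-T ^ (p + 1) / (p + 1) + exp (-(lam * T)) / lam) :=
        add_le_add hsmall_int hlarge_int
    _ = A * R * (1 / α) + A * T + B * (r * exp (-(lam * T))) * (1 / lam)
          - B * (r * T ^ (p + 1)) * (1 / (p + 1)) := by
        rw [hTα]; ring
    _ ≤ A * R * (1 / α) + A * R + B * R * (1 / lam) - B * R * (1 / (p + 1)) := by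
        rw [hrT]
        gcongr
        calc r * exp (-(lam * T)) ≤ r * 1 := by gcongr
          _ ≤ R := by rwa [mul_one]
    _ = (A * (1 / α + 1) + B * (1 / lam - 1 / (p + 1))) * R := by ring

/-- Abstract integral estimate behind the elliptic Schauder estimates:
if `|w(t,·)| ≤ K(t^{θ/2−1} + 1)` and `|w(t,x+v) − w(t,x)| ≤ K(t^{θ/2−3/2−h} + 1)|v|` for
`v ∈ E`, then `U(x) = ∫₀^∞ e^{−λt} w(t,x) dt` converges absolutely and
`|U(x+v) − U(x)| ≤ C K |v|^{θ/(2h+1)}` for `v ∈ E` with `0 < |v| ≤ 1`, where `C` depends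
only on `θ`, `λ` and `h`. -/
theorem stmt18 (θ lam : ℝ) (hθ0 : 0 < θ) (hθ1 : θ < 1) (hlam : 0 < lam) (h : ℕ) :
    ∃ C : ℝ, 0 < C ∧
      ∀ (n : ℕ) (E : Submodule ℝ (En n)) (K : ℝ), 0 < K →
      ∀ w : ℝ → En n → ℝ,
      (∀ x, AEMeasurable (fun t => w t x) (volume.restrict (Set.Ioi (0 : ℝ)))) →
      (∀ t : ℝ, 0 < t → ∀ x, |w t x| ≤ K * (t ^ (θ / 2 - 1) + 1)) →
      (∀ t : ℝ, 0 < t → ∀ x, ∀ v ∈ E,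
        |w t (x + v) - w t x| ≤ K * (t ^ (θ / 2 - 3 / 2 - (h : ℝ)) + 1) * ‖v‖) →
      (∀ x, IntegrableOn (fun t => Real.exp (-(lam * t)) * w t x) (Set.Ioi 0)) ∧
      ∀ x : En n, ∀ v ∈ E, 0 < ‖v‖ → ‖v‖ ≤ 1 →
        |(∫ t in Set.Ioi (0 : ℝ), Real.exp (-(lam * t)) * w t (x + v)) -
            ∫ t in Set.Ioi (0 : ℝ), Real.exp (-(lam * t)) * w t x| ≤
          C * K * ‖v‖ ^ (θ / (2 * (h : ℝ) + 1)) := by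
  set p : ℝ := θ / 2 - 3 / 2 - h with hp_def
  have hp : p < -1 := by have : (0 : ℝ) ≤ h := h.cast_nonneg; linarith
  have hp_inv : 0 < -1 / (p + 1) := div_pos_of_neg_of_neg (by norm_num) (by linarith)
  refine ⟨2 * (1 / (θ / 2) + 1) + (1 / lam - 1 / (p + 1)),
    by rw [sub_eq_add_neg, ← neg_div]; positivity, ?_⟩
  intro n E K hK w hmeas hbound hlip
  have hint (x : En n) : IntegrableOn (fun t => exp (-(lam * t)) * w t x) (Ioi 0) :=
    integrableOn_exp_neg_mul_mul_of_abs_le hlam (by linarith) (hmeas x) (fun t ht => hbound t ht x)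
  refine ⟨hint, fun x v hv hv0 hv1 => ?_⟩
  have hsmall (t : ℝ) (ht : 0 < t) : |exp (-(lam * t)) * w t (x + v) - exp (-(lam * t)) * w t x|
      ≤ 2 * K * (t ^ (θ / 2 - 1) + 1) := by
    rw [← mul_sub, abs_mul, abs_exp]
    calc exp (-(lam * t)) * |w t (x + v) - w t x| ≤ |w t (x + v) - w t x| :=
          mul_le_of_le_one_left (abs_nonneg _) (exp_le_one_iff.2 (by nlinarith))
      _ ≤ |w t (x + v)| + |w t x| := abs_sub _ _
      _ ≤ 2 * K * (t ^ (θ / 2 - 1) + 1) := by linarith [hbound t ht (x + v), hbound t ht x]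
  have hlarge (t : ℝ) (ht : 0 < t) : |exp (-(lam * t)) * w t (x + v) - exp (-(lam * t)) * w t x|
      ≤ K * ‖v‖ * (t ^ p + exp (-(lam * t))) := by
    rw [← mul_sub]
    exact abs_exp_neg_mul_mul_le_of_abs_le hlam.le ht.le (by positivity)
      ((hlip t ht x v hv).trans_eq (by ring))
  have hexponent : θ / 2 / (θ / 2 - p - 1) = θ / (2 * (h : ℝ) + 1) := by
    rw [show θ / 2 - p - 1 = (2 * h + 1) / 2 by rw [hp_def]; ring]
    field_simp
  rw [← integral_sub (hint (x + v)) (hint x)]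
  calc _ ≤ _ := abs_integral_Ioi_le_rpow_of_abs_le (by linarith) (by linarith) hp hlam
        (by positivity) hK.le hv0 hv1 ((hint (x + v)).sub (hint x)) hsmall hlarge
    _ = _ := by rw [hexponent]; ring

end
end
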